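/- Let b, α, β ∈ ℝ with α ≠ 0, and let f(w) = α w + β. For every ε ∈ ℝ, if u : ℝ × ℝ → ℝ is a smooth solution of the generalized Kawahara equation with this f, then the Galilean-boosted function v(x,t) := u(x + ε t, t) + ε/α is again a smooth solution of the same equation. -/

import Mathlib

/-- Partial derivative in the first (space) variable. -/
noncomputable def px (u : ℝ × ℝ → ℝ) : ℝ × ℝ → ℝ :=
  fun p => deriv (fun x => u (x, p.2)) p.1

/-- Partial derivative in the second (time) variable. -/
noncomputable def pt (u : ℝ × ℝ → ℝ) : ℝ × ℝ → ℝ :=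
  fun p => deriv (fun t => u (p.1, t)) p.2

lemma px_eq (u : ℝ × ℝ → ℝ) (hu : ContDiff ℝ (⊤ : ℕ∞) u) (p : ℝ × ℝ) :
    px u p = fderiv ℝ u p (1, 0) := by
  have h1 : HasFDerivAt (fun x : ℝ => (x, p.2)) (ContinuousLinearMap.inl ℝ ℝ ℝ) p.1 :=
    hasFDerivAt_prodMk_left _ _
  have h2 := (hu.differentiable (by simp) p).hasFDerivAt
  have h3 : (p.1, p.2) = p := rfl
  have := ((h3 ▸ h2).comp p.1 h1).hasDerivAt
  simpa [px, Function.comp_def] using this.deriv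

lemma pt_eq (u : ℝ × ℝ → ℝ) (hu : ContDiff ℝ (⊤ : ℕ∞) u) (p : ℝ × ℝ) :
    pt u p = fderiv ℝ u p (0, 1) := by
  have h1 : HasFDerivAt (fun t : ℝ => (p.1, t)) (ContinuousLinearMap.inr ℝ ℝ ℝ) p.2 :=
    hasFDerivAt_prodMk_right _ _
  have h2 := (hu.differentiable (by simp) p).hasFDerivAt
  have h3 : (p.1, p.2) = p := rfl
  have := ((h3 ▸ h2).comp p.2 h1).hasDerivAt
  simpa [pt, Function.comp_def] using this.deriv

lemma px_smooth {u : ℝ × ℝ → ℝ} (hu : ContDiff ℝ (⊤ : ℕ∞) u) : ContDiff ℝ (⊤ : ℕ∞) (px u) := by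
  have h : px u = fun p => (ContinuousLinearMap.apply ℝ ℝ ((1 : ℝ), (0 : ℝ))) (fderiv ℝ u p) := by
    funext p; simp [px_eq u hu p]
  rw [h]
  exact (ContinuousLinearMap.apply ℝ ℝ _).contDiff.comp (hu.fderiv_right (m := ((⊤ : ℕ∞) : WithTop ℕ∞)) (by rw [← WithTop.coe_one, ← WithTop.coe_add]; exact WithTop.coe_le_coe.mpr le_top))

lemma px_comp (u : ℝ × ℝ → ℝ) (ε c : ℝ) (p : ℝ × ℝ) :
    px (fun q : ℝ × ℝ => u (q.1 + ε * q.2, q.2) + c) p = px u (p.1 + ε * p.2, p.2) := by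
  unfold px
  simp only [deriv_add_const]
  exact deriv_comp_add_const (f := fun y => u (y, p.2)) (a := ε * p.2) (x := p.1)

lemma px_iter_comp (n : ℕ) : ∀ (u : ℝ × ℝ → ℝ), ContDiff ℝ (⊤ : ℕ∞) u → ∀ (ε c : ℝ) (p : ℝ × ℝ),
    px^[n+1] (fun q : ℝ × ℝ => u (q.1 + ε * q.2, q.2) + c) p
      = px^[n+1] u (p.1 + ε * p.2, p.2) := by
  induction n with
  | zero => intro u hu ε c p; simpa using px_comp u ε c p
  | succ n ih =>
    intro u hu ε c p
    have hpx : px (fun q : ℝ × ℝ => u (q.1 + ε * q.2, q.2) + c)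
        = fun q : ℝ × ℝ => (px u) (q.1 + ε * q.2, q.2) + 0 := by
      funext q; simpa using px_comp u ε c q
    calc px^[n+1+1] (fun q : ℝ × ℝ => u (q.1 + ε * q.2, q.2) + c) p
        = px^[n+1] (px (fun q : ℝ × ℝ => u (q.1 + ε * q.2, q.2) + c)) p := by
          rw [Function.iterate_succ_apply]
      _ = px^[n+1] (fun q : ℝ × ℝ => (px u) (q.1 + ε * q.2, q.2) + 0) p := by rw [hpx]
      _ = px^[n+1] (px u) (p.1 + ε * p.2, p.2) := ih (px u) (px_smooth hu) ε 0 p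
      _ = px^[n+1+1] u (p.1 + ε * p.2, p.2) := by rw [← Function.iterate_succ_apply]

lemma pt_comp (u : ℝ × ℝ → ℝ) (hu : ContDiff ℝ (⊤ : ℕ∞) u) (ε c : ℝ) (p : ℝ × ℝ) :
    pt (fun q : ℝ × ℝ => u (q.1 + ε * q.2, q.2) + c) p
      = pt u (p.1 + ε * p.2, p.2) + ε * px u (p.1 + ε * p.2, p.2) := by
  have hγ : HasDerivAt (fun t : ℝ => ((p.1 + ε * t, t) : ℝ × ℝ)) (ε, 1) p.2 := by
    have h1 : HasDerivAt (fun t : ℝ => p.1 + ε * t) ε p.2 := by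
      simpa using ((hasDerivAt_id p.2).const_mul ε).const_add p.1
    exact h1.prodMk (hasDerivAt_id p.2)
  have hd : HasDerivAt (u ∘ fun t : ℝ => ((p.1 + ε * t, t) : ℝ × ℝ))
      (fderiv ℝ u (p.1 + ε * p.2, p.2) (ε, 1)) p.2 :=
    HasFDerivAt.comp_hasDerivAt p.2
      ((hu.differentiable (by simp) ((p.1 + ε * p.2, p.2) : ℝ × ℝ)).hasFDerivAt) hγ
  have hderiv : deriv (fun t : ℝ => u (p.1 + ε * t, t)) p.2
      = fderiv ℝ u (p.1 + ε * p.2, p.2) (ε, 1) := by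
    simpa [Function.comp_def] using hd.deriv
  have hsplit : ((ε, 1) : ℝ × ℝ) = ε • ((1 : ℝ), (0 : ℝ)) + ((0 : ℝ), (1 : ℝ)) := by
    simp [Prod.ext_iff]
  have h0 : pt (fun q : ℝ × ℝ => u (q.1 + ε * q.2, q.2) + c) p
      = deriv (fun t : ℝ => u (p.1 + ε * t, t) + c) p.2 := rfl
  rw [h0, deriv_add_const, hderiv, hsplit, (fderiv ℝ u _).map_add, (fderiv ℝ u _).map_smul,
    ← px_eq u hu ((p.1 + ε * p.2, p.2) : ℝ × ℝ), ← pt_eq u hu ((p.1 + ε * p.2, p.2) : ℝ × ℝ)]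
  simp [smul_eq_mul]; ring

theorem gke_galilean_boost_symmetry
    (b α β : ℝ) (hα : α ≠ 0) (ε : ℝ)
    (u : ℝ × ℝ → ℝ) (hu : ContDiff ℝ (⊤ : ℕ∞) u)
    (hgke : ∀ p : ℝ × ℝ,
      pt u p = px^[5] u p + b * px^[3] u p + (α * u p + β) * px u p) :
    ContDiff ℝ (⊤ : ℕ∞) (fun q : ℝ × ℝ => u (q.1 + ε * q.2, q.2) + ε / α) ∧
    ∀ p : ℝ × ℝ,
      pt (fun q : ℝ × ℝ => u (q.1 + ε * q.2, q.2) + ε / α) p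
        = px^[5] (fun q : ℝ × ℝ => u (q.1 + ε * q.2, q.2) + ε / α) p
          + b * px^[3] (fun q : ℝ × ℝ => u (q.1 + ε * q.2, q.2) + ε / α) p
          + (α * (u (p.1 + ε * p.2, p.2) + ε / α) + β)
            * px (fun q : ℝ × ℝ => u (q.1 + ε * q.2, q.2) + ε / α) p := by
  constructor
  · apply ContDiff.add _ contDiff_const
    exact hu.comp ((contDiff_fst.add (contDiff_const.mul contDiff_snd)).prodMk contDiff_snd)
  · intro p
    have h5 := px_iter_comp 4 u hu ε (ε / α) p
    have h3 := px_iter_comp 2 u hu ε (ε / α) p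
    have h1 := px_comp u ε (ε / α) p
    have hpt := pt_comp u hu ε (ε / α) p
    rw [hpt, h5, h3, h1, hgke (p.1 + ε * p.2, p.2)]
    field_simp
    ring
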